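/- Let H be a hypergraph with no dominating vertex (no vertex belonging to all hyperedges) and let I'(H) be its split-incidence graph. Then the minimal total dominating sets of I'(H) are exactly the minimal transversals of H. -/

import Mathlib

/-!
A total dominating set `D` of `I'(H)` must dominate every `y_i`, so `D ∩ V(H)` is a transversal.
Conversely a transversal `T ⊆ V(H)` dominates every `y_i`, and, since no vertex lies in all
hyperedges, every `x ∈ V(H)` has a neighbour in `T` other than itself, so `T` is totally
dominating. Image and preimage under the injection `V(H) → V(I'(H))` form a Galois connection
whose lower adjoint is injective, and such a pair exchanging the two properties matches up their
minimal elements.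
-/

open Set

variable {V ι : Type*}

/-- `T ⊆ V` is a transversal of the hypergraph whose hyperedges are `e i`, `i : ι`. -/
def TransversalI (e : ι → Set V) (T : Set V) : Prop := ∀ i, (T ∩ e i).Nonempty

/-- Auxiliary relation generating the split-incidence graph `I'(H)`:
`V(H)` is made into a clique and `x` is joined to `y_i` whenever `x ∈ e i`. -/
def SIRel (e : ι → Set V) : V ⊕ ι → V ⊕ ι → Prop
  | Sum.inl _, Sum.inl _ => True
  | Sum.inl x, Sum.inr i => x ∈ e i
  | _, _ => False

/-- The split-incidence graph `I'(H)` of a hypergraph `H`. -/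
def splitIncidence (e : ι → Set V) : SimpleGraph (V ⊕ ι) :=
  SimpleGraph.fromRel (SIRel e)

/-- `D` is a total dominating set of `G`: every vertex has a neighbour in `D`. -/
def TotalDom {W : Type*} (G : SimpleGraph W) (D : Set W) : Prop :=
  ∀ v, ∃ u ∈ D, G.Adj u v

theorem GaloisConnection.minimal_iff_exists_minimal {α β : Type*} [Preorder α] [PartialOrder β]
    {l : α → β} {u : β → α} (gc : GaloisConnection l u) (hul : Function.LeftInverse u l)
    {P : α → Prop} {Q : β → Prop} (hPQ : ∀ a, P a → Q (l a)) (hQP : ∀ b, Q b → P (u b))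
    {b : β} : Minimal Q b ↔ ∃ a, Minimal P a ∧ b = l a := by
  constructor
  · rintro ⟨hb, hmin⟩
    have hb_eq : b = l (u b) := le_antisymm (hmin (hPQ _ (hQP b hb)) (gc.l_u_le b)) (gc.l_u_le b)
    refine ⟨u b, ⟨hQP b hb, fun a ha hab => ?_⟩, hb_eq⟩
    have hlab : l a ≤ b := hb_eq ▸ gc.monotone_l hab
    calc u b ≤ u (l a) := gc.monotone_u (hmin (hPQ a ha) hlab)
      _ = a := hul a
  · rintro ⟨a, ⟨ha, hmin⟩, rfl⟩
    refine ⟨hPQ a ha, fun b hb hba => ?_⟩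
    have hub : u b ≤ a := hul a ▸ gc.monotone_u hba
    calc l a ≤ l (u b) := gc.monotone_l (hmin (hQP b hb) hub)
      _ ≤ b := gc.l_u_le b

section SplitIncidence

variable {e : ι → Set V}

@[simp]
theorem splitIncidence_adj_inl_inl {x y : V} :
    (splitIncidence e).Adj (Sum.inl x) (Sum.inl y) ↔ x ≠ y := by
  simp [splitIncidence, SIRel]

@[simp]
theorem splitIncidence_adj_inl_inr {x : V} {i : ι} :
    (splitIncidence e).Adj (Sum.inl x) (Sum.inr i) ↔ x ∈ e i := by
  simp [splitIncidence, SIRel]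

@[simp]
theorem splitIncidence_not_adj_inr_inr {i j : ι} :
    ¬ (splitIncidence e).Adj (Sum.inr i) (Sum.inr j) := by
  simp [splitIncidence, SIRel]

theorem TotalDom.transversalI_preimage_inl {D : Set (V ⊕ ι)}
    (hD : TotalDom (splitIncidence e) D) : TransversalI e (Sum.inl ⁻¹' D) := by
  intro i
  obtain ⟨u, huD, hadj⟩ := hD (Sum.inr i)
  cases u with
  | inl x => exact ⟨x, huD, splitIncidence_adj_inl_inr.mp hadj⟩
  | inr j => exact absurd hadj splitIncidence_not_adj_inr_inr

theorem TransversalI.totalDom_image_inl (hnd : ¬ ∃ x : V, ∀ i, x ∈ e i) {T : Set V}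
    (hT : TransversalI e T) : TotalDom (splitIncidence e) (Sum.inl '' T) := by
  rintro (x | i)
  · obtain ⟨i, hxi⟩ := not_forall.mp (not_exists.mp hnd x)
    obtain ⟨y, hyT, hyi⟩ := hT i
    exact ⟨Sum.inl y, mem_image_of_mem _ hyT,
      splitIncidence_adj_inl_inl.mpr fun hyx => hxi (hyx ▸ hyi)⟩
  · obtain ⟨y, hyT, hyi⟩ := hT i
    exact ⟨Sum.inl y, mem_image_of_mem _ hyT, splitIncidence_adj_inl_inr.mpr hyi⟩

end SplitIncidence

/-- If the hypergraph `H` has no dominating vertex, then the minimal total dominating sets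
of its split-incidence graph `I'(H)` are exactly (the copies of) the minimal
transversals of `H`. -/
theorem stmt_7 (e : ι → Set V) (hnd : ¬ ∃ x : V, ∀ i, x ∈ e i) (D : Set (V ⊕ ι)) :
    Minimal (TotalDom (splitIncidence e)) D ↔
      ∃ T : Set V, Minimal (TransversalI e) T ∧ D = Sum.inl '' T :=
  Set.image_preimage.minimal_iff_exists_minimal (Set.preimage_image_eq · Sum.inl_injective)
    (fun _ hT => hT.totalDom_image_inl hnd) (fun _ hD => hD.transversalI_preimage_inl)
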